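/- Let X be a set of n elements, S ⊆ X with |S| = k, and fix a linear order π on S. Let i ∈ X \ S be an unobserved element and j ∈ S the element at rank r in π (i.e., exactly r-1 elements of S precede j). Then the number of linear extensions σ of π to X with i <_σ j equals Σ_{s=0}^{n-k-1} V(n-k-1, s) · (s+1) · Shuf(r-1, s+1) · (n-k-s-1)! · Shuf(n-k-s-1, k-r), where V(m, s) = m!/(m-s)! is the number of s-variations of m items and Shuf(a, b) = (a+b)!/(a!·b!) is the number of shuffles of lists of lengths a and b. -/

import Mathlib

/-- `V m s = m!/(m-s)!`, the number of `s`-variations of `m` items. -/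
def V (m s : ℕ) : ℕ := m.factorial / (m - s).factorial

/-- `Shuf a b = (a+b)!/(a!·b!)`, the number of shuffles of lists of lengths `a` and `b`. -/
def Shuf (a b : ℕ) : ℕ := (a + b).factorial / (a.factorial * b.factorial)

/-! The relative order that `σ` induces on `T = S ∪ {i}` is uniformly distributed over the
`(k+1)!` orders of `T`: precomposing `σ` with a permutation of `T` carries one fibre injectively
into any other. An order of `T` extending `π` is fixed by the position `p` of `i`, and it puts
`i` before `j` iff `p ≤ r - 1`; so the count is `r · n! / (k+1)!`. The stated sum takes the same
value by the upper Chu–Vandermonde identity (with `c = k - r`)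
`∑_{s+t=N} C(r+s, r) C(c+t, c) = C(N+r+c+1, r+c+1)`, read off from
`(1-X)^{-(r+1)} (1-X)^{-(c+1)} = (1-X)^{-(r+c+2)}`. -/

open Finset PowerSeries

theorem Nat.sum_antidiagonal_add_choose_mul_add_choose (p q N : ℕ) :
    ∑ ij ∈ antidiagonal N, (p + ij.1).choose p * (q + ij.2).choose q
      = (p + q + 1 + N).choose (p + q + 1) := by
  have h := congrArg (fun f : ℤ⟦X⟧ˣ => coeff N f.val) (invOneSubPow_add ℤ (p + 1) (q + 1))
  rw [show p + 1 + (q + 1) = p + q + 1 + 1 by ring] at h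
  simp only [Units.val_mul, invOneSubPow_val_succ_eq_mk_add_choose, coeff_mul, coeff_mk] at h
  exact_mod_cast h.symm

theorem Shuf_eq_choose (a b : ℕ) : Shuf a b = (a + b).choose a := by
  rw [Shuf, Nat.choose_eq_factorial_div_factorial (Nat.le_add_right a b), Nat.add_sub_cancel_left]

theorem V_eq_descFactorial {m s : ℕ} (h : s ≤ m) : V m s = m.descFactorial s :=
  (Nat.descFactorial_eq_div h).symm

theorem summand_eq_mul_choose_mul_choose {m r s : ℕ} (c : ℕ) (hs : s < m) (hr : 1 ≤ r) :
    V (m - 1) s * (s + 1) * Shuf (r - 1) (s + 1) * (m - s - 1).factorial * Shuf (m - s - 1) c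
      = r * (m - 1).factorial * ((r + s).choose r * (c + (m - 1 - s)).choose c) := by
  have hV : V (m - 1) s * (m - 1 - s).factorial = (m - 1).factorial := by
    rw [V_eq_descFactorial (by omega), mul_comm, Nat.factorial_mul_descFactorial (by omega)]
  have hleft : (s + 1) * Shuf (r - 1) (s + 1) = r * (r + s).choose r := by
    have h := Nat.choose_succ_right_eq (r + s) (r - 1)
    rw [Nat.sub_add_cancel hr, show r + s - (r - 1) = s + 1 by omega] at h
    rw [Shuf_eq_choose, show r - 1 + (s + 1) = r + s by omega, mul_comm r, h, mul_comm]
  have hright : Shuf (m - s - 1) c = (c + (m - 1 - s)).choose c := by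
    rw [Shuf_eq_choose, Nat.choose_symm_add, add_comm, show m - s - 1 = m - 1 - s by omega]
  rw [hright, show m - s - 1 = m - 1 - s by omega]
  calc _ = (V (m - 1) s * (m - 1 - s).factorial) * ((s + 1) * Shuf (r - 1) (s + 1))
        * (c + (m - 1 - s)).choose c := by ring
    _ = _ := by rw [hV, hleft]; ring

theorem sum_summand_mul_factorial_eq {n k r : ℕ} (hkn : k < n) (hr : 1 ≤ r) (hrk : r ≤ k) :
    (∑ s ∈ range (n - k),
        V (n - k - 1) s * (s + 1) * Shuf (r - 1) (s + 1)
          * (n - k - s - 1).factorial * Shuf (n - k - s - 1) (k - r)) * (k + 1).factorial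
      = r * n.factorial := by
  set m := n - k
  have hm : range m = range (m - 1).succ := by
    rw [Nat.succ_eq_add_one, Nat.sub_add_cancel (by omega)]
  rw [sum_congr rfl fun s hs => summand_eq_mul_choose_mul_choose (k - r) (mem_range.1 hs) hr,
    ← mul_sum, hm, ← Nat.sum_antidiagonal_eq_sum_range_succ
      (fun s t => (r + s).choose r * (k - r + t).choose (k - r)),
    Nat.sum_antidiagonal_add_choose_mul_add_choose,
    show r + (k - r) + 1 = k + 1 by omega, show k + 1 + (m - 1) = n by omega]
  calc _ = r * (n.choose (k + 1) * (k + 1).factorial * (n - (k + 1)).factorial) := by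
        rw [show m - 1 = n - (k + 1) by omega]; ring
    _ = r * n.factorial := by rw [Nat.choose_mul_factorial_mul_factorial hkn]

section Pattern

variable {X α : Type*} [LinearOrder α] {c : ℕ}

def pattern (T : Finset X) (hT : #T = c) (σ : X ≃ α) : T ≃ Fin c :=
  (σ.subtypeEquiv fun _ => (mem_map' σ.toEmbedding).symm).trans
    ((T.map σ.toEmbedding).orderIsoOfFin (by rw [card_map, hT])).symm.toEquiv

variable {T : Finset X} (hT : #T = c)

theorem pattern_lt_pattern_iff (σ : X ≃ α) (a b : T) :
    pattern T hT σ a < pattern T hT σ b ↔ σ a < σ b := by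
  simp [pattern]

theorem pattern_eq_of_lt_iff {σ : X ≃ α} {τ : T ≃ Fin c}
    (h : ∀ a b : T, σ a < σ b ↔ τ a < τ b) : pattern T hT σ = τ := by
  set P := pattern T hT σ
  have hmono : StrictMono (P.symm.trans τ) := fun x y hxy => by
    simpa [← h, ← pattern_lt_pattern_iff hT, P] using hxy
  have hid : hmono.orderIsoOfSurjective _ (Equiv.surjective _) = OrderIso.refl _ :=
    Subsingleton.elim _ _
  ext t
  simpa using (congrArg (fun e => (e (P t) : ℕ)) hid).symm

variable [DecidableEq X]

theorem pattern_ofSubtype_trans (ρ : Equiv.Perm T) (σ : X ≃ α) :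
    pattern T hT ((Equiv.Perm.ofSubtype ρ).trans σ) = ρ.trans (pattern T hT σ) :=
  pattern_eq_of_lt_iff hT fun a b => by
    simp only [Equiv.trans_apply, Equiv.Perm.ofSubtype_apply_coe, pattern_lt_pattern_iff]

variable [Fintype X] [Fintype α] [DecidableEq α]

theorem card_filter_pattern_eq_le (τ τ' : T ≃ Fin c) :
    #{σ : X ≃ α | pattern T hT σ = τ} ≤ #{σ : X ≃ α | pattern T hT σ = τ'} := by
  refine card_le_card_of_injOn (fun σ => (Equiv.Perm.ofSubtype (τ'.trans τ.symm)).trans σ)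
    (fun σ hσ => ?_) (fun σ _ σ' _ h => ?_)
  · simp only [coe_filter, mem_univ, true_and, Set.mem_ofPred_eq] at hσ ⊢
    rw [pattern_ofSubtype_trans, hσ]
    ext; simp
  · ext x
    simpa using DFunLike.congr_fun h ((Equiv.Perm.ofSubtype (τ'.trans τ.symm)).symm x)

theorem card_filter_pattern_mem_mul_factorial (G : Finset (T ≃ Fin c)) :
    #{σ : X ≃ α | pattern T hT σ ∈ G} * c.factorial = #G * Fintype.card (X ≃ α) := by
  have hcard : Fintype.card T = c := by rw [Fintype.card_coe, hT]
  set τ₀ := Fintype.equivFinOfCardEq hcard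
  have hfiber (τ : T ≃ Fin c) :
      #{σ : X ≃ α | pattern T hT σ = τ} = #{σ : X ≃ α | pattern T hT σ = τ₀} :=
    (card_filter_pattern_eq_le hT τ τ₀).antisymm (card_filter_pattern_eq_le hT τ₀ τ)
  have hsum (H : Finset (T ≃ Fin c)) : #{σ : X ≃ α | pattern T hT σ ∈ H}
      = #H * #{σ : X ≃ α | pattern T hT σ = τ₀} := by
    rw [← sum_card_fiberwise_eq_card_filter, sum_const_nat fun τ _ => hfiber τ]
  have huniv := hsum univ
  simp only [mem_univ, filter_true] at huniv
  rw [card_univ, card_univ, Fintype.card_equiv τ₀, hcard] at huniv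
  rw [hsum, huniv]
  ring

end Pattern

section InsertOrder

variable {X : Type*} [DecidableEq X] {S : Finset X} {k : ℕ} {i : X}

def insertOrder (π : S ≃ Fin k) (hi : i ∉ S) (p : Fin (k + 1)) :
    (insert i S : Finset X) ≃ Fin (k + 1) :=
  (subtypeInsertEquivOption hi).trans ((Equiv.optionCongr π).trans (finSuccEquiv' p).symm)

variable (π : S ≃ Fin k) (hi : i ∉ S)

@[simp]
theorem insertOrder_apply_self (p : Fin (k + 1)) :
    insertOrder π hi p ⟨i, mem_insert_self i S⟩ = p := by
  simp [insertOrder, subtypeInsertEquivOption]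

@[simp]
theorem insertOrder_apply_of_mem (p : Fin (k + 1)) {x : X} (hx : x ∈ S) :
    insertOrder π hi p ⟨x, mem_insert_of_mem hx⟩ = p.succAbove (π ⟨x, hx⟩) := by
  have hne : x ≠ i := fun h => hi (h ▸ hx)
  simp [insertOrder, subtypeInsertEquivOption, hne]

theorem extends_iff_eq_insertOrder (τ : (insert i S : Finset X) ≃ Fin (k + 1)) :
    (∀ a b : S, π a < π b →
        τ ⟨a, mem_insert_of_mem a.2⟩ < τ ⟨b, mem_insert_of_mem b.2⟩)
      ↔ τ = insertOrder π hi (τ ⟨i, mem_insert_self i S⟩) := by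
  set p := τ ⟨i, mem_insert_self i S⟩
  refine ⟨fun h => ?_, fun h a b hab => by rw [h]; simpa using Fin.strictMono_succAbove p hab⟩
  set f : Fin k → Fin (k + 1) := fun x => τ ⟨π.symm x, mem_insert_of_mem (π.symm x).2⟩
  have hf : f = p.succAbove := by
    have hmem : ∀ x, f x ∈ ({p}ᶜ : Finset (Fin (k + 1))) := fun x => by
      rw [mem_compl, mem_singleton]
      exact fun h => hi (Subtype.mk.inj (τ.injective h) ▸ (π.symm x).2)
    have hmono : StrictMono f := fun x y hxy => h _ _ (by simpa using hxy)
    rw [orderEmbOfFin_unique (by simp [card_compl]) hmem hmono,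
      orderEmbOfFin_compl_singleton_eq_succAboveOrderEmb]
    rfl
  ext ⟨t, ht⟩
  rcases mem_insert.1 ht with rfl | ht
  · simp [p]
  · rw [insertOrder_apply_of_mem π hi p ht, ← hf]
    simp [f]

def extensionsBefore (π : S ≃ Fin k) (i j : X) (hj : j ∈ S) :
    Finset ((insert i S : Finset X) ≃ Fin (k + 1)) :=
  {τ | (∀ a b : S, π a < π b →
        τ ⟨a, mem_insert_of_mem a.2⟩ < τ ⟨b, mem_insert_of_mem b.2⟩)
      ∧ τ ⟨i, mem_insert_self i S⟩ < τ ⟨j, mem_insert_of_mem hj⟩}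

theorem card_extensionsBefore (hi : i ∉ S) {j : X} (hj : j ∈ S) :
    #(extensionsBefore π i j hj) = π ⟨j, hj⟩ + 1 := by
  rw [← Fin.val_castSucc, ← Fin.card_Iic]
  refine card_nbij' (fun τ => τ ⟨i, mem_insert_self i S⟩) (insertOrder π hi) ?_ ?_ ?_ ?_
  · intro τ hτ
    simp only [extensionsBefore, coe_filter, mem_univ, true_and, Set.mem_ofPred_eq] at hτ
    obtain ⟨hext, hlt⟩ := hτ
    rw [(extends_iff_eq_insertOrder π hi τ).1 hext, insertOrder_apply_of_mem π hi _ hj,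
      insertOrder_apply_self, Fin.lt_succAbove_iff_le_castSucc] at hlt
    simpa using hlt
  · intro p hp
    simp only [extensionsBefore, coe_filter, mem_univ, true_and, Set.mem_ofPred_eq]
    refine ⟨(extends_iff_eq_insertOrder π hi _).2 (by simp), ?_⟩
    rw [insertOrder_apply_self, insertOrder_apply_of_mem π hi _ hj,
      Fin.lt_succAbove_iff_le_castSucc]
    simpa using hp
  · intro τ hτ
    simp only [extensionsBefore, coe_filter, mem_univ, true_and, Set.mem_ofPred_eq] at hτ
    exact ((extends_iff_eq_insertOrder π hi τ).1 hτ.1).symm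
  · intro p _
    simp

end InsertOrder

/-- Let `X` have `n` elements, `S ⊆ X` have `k` elements carrying a linear order `π`,
let `i ∈ X \ S` be unobserved and let `j ∈ S` have rank `r` in `π` (exactly `r-1`
elements of `S` precede `j`).  Then the number of linear extensions `σ` of `π` to `X`
with `i <_σ j` equals
`Σ_{s=0}^{n-k-1} V(n-k-1,s) · (s+1) · Shuf(r-1, s+1) · (n-k-s-1)! · Shuf(n-k-s-1, k-r)`. -/
theorem extension_count_above {X : Type*} [Fintype X] [DecidableEq X]
    (n k : ℕ) (hn : Fintype.card X = n) (S : Finset X) (hk : S.card = k)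
    (π : S ≃ Fin k) (i : X) (hi : i ∉ S) (j : X) (hj : j ∈ S)
    (r : ℕ) (hr1 : 1 ≤ r) (hr : (π ⟨j, hj⟩ : ℕ) = r - 1) :
    (Finset.univ.filter
        (fun σ : X ≃ Fin n =>
          (∀ a b : S, π a < π b → σ a < σ b) ∧ σ i < σ j)).card
      = ∑ s ∈ Finset.range (n - k),
          V (n - k - 1) s * (s + 1) * Shuf (r - 1) (s + 1)
            * (n - k - s - 1).factorial * Shuf (n - k - s - 1) (k - r) := by
  have hT : #(insert i S) = k + 1 := by rw [card_insert_of_notMem hi, hk]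
  have hkn : k < n := by have := card_le_univ (insert i S); omega
  have hrk : r ≤ k := by have := (π ⟨j, hj⟩).isLt; omega
  have hcard := card_filter_pattern_mem_mul_factorial (α := Fin n) hT (extensionsBefore π i j hj)
  rw [card_extensionsBefore π hi hj, show (π ⟨j, hj⟩ : ℕ) + 1 = r by omega,
    Fintype.card_equiv (Fintype.equivFinOfCardEq hn), hn] at hcard
  calc _ = #{σ : X ≃ Fin n | pattern (insert i S) hT σ ∈ extensionsBefore π i j hj} := by
        congr 1
        ext σ
        simp [extensionsBefore, pattern_lt_pattern_iff]
    _ = _ := Nat.eq_of_mul_eq_mul_right (Nat.factorial_pos (k + 1))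
        (hcard.trans (sum_summand_mul_factorial_eq hkn hr1 hrk).symm)
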